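/- Let T be a product of two orthogonal projections on a Hilbert space H and suppose the range of T is not closed. Then for every pair of orthogonal projections (P, Q) with T = PQ, one has ‖P − Q‖ = 1. -/

import Mathlib

/-
For orthogonal projections `p`, `q` one has `(p - q)² + (1 - (p + q))² = 1`, so `(p - q)² ≤ 1`
and `‖p - q‖ ≤ 1`. If `‖P - Q‖ < 1`, then `P` is bounded below on the closed range of `Q`,
because `‖x - P x‖ = ‖(Q - P) x‖ ≤ ‖P - Q‖ ‖x‖` there; so `P (ran Q) = ran (P Q)` is closed.
-/

open ContinuousLinearMap Submodule LinearMap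

variable {H : Type*} [NormedAddCommGroup H] [InnerProductSpace ℂ H] [CompleteSpace H]

/-- `P` is an orthogonal projection: `P² = P = P*`. -/
def IsOrthoProj (P : H →L[ℂ] H) : Prop :=
  P ∘L P = P ∧ ContinuousLinearMap.adjoint P = P

/-- The orthogonal projection onto a (complete, i.e. closed) subspace,
as an operator on `H`. -/
noncomputable def projOn (K : Submodule ℂ H) [CompleteSpace K] : H →L[ℂ] H :=
  K.subtypeL.comp (orthogonalProjection K)

/-- The orthogonal projection onto a closed subspace, as an operator on `H`. -/
noncomputable def projOnc (K : Submodule ℂ H) (hK : IsClosed (K : Set H)) : H →L[ℂ] H :=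
  haveI : CompleteSpace K := hK.completeSpace_coe
  K.subtypeL.comp (orthogonalProjection K)

theorem IsIdempotentElem.sq_sub_add_sq_one_sub_add {R : Type*} [Ring R] {p q : R}
    (hp : IsIdempotentElem p) (hq : IsIdempotentElem q) :
    (p - q) ^ 2 + (1 - (p + q)) ^ 2 = 1 := by
  simp only [sq, mul_sub, sub_mul, mul_add, add_mul, one_mul, mul_one, hp.eq, hq.eq]
  abel

theorem IsStarProjection.norm_sub_le_one {A : Type*} [CStarAlgebra A] [PartialOrder A]
    [StarOrderedRing A] {p q : A} (hp : IsStarProjection p) (hq : IsStarProjection q) :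
    ‖p - q‖ ≤ 1 := by
  have hpq : IsSelfAdjoint (p - q) := hp.isSelfAdjoint.sub hq.isSelfAdjoint
  have hsq_le : (p - q) ^ 2 ≤ 1 := by
    rw [← hp.isIdempotentElem.sq_sub_add_sq_one_sub_add hq.isIdempotentElem]
    exact le_add_of_nonneg_right
      ((IsSelfAdjoint.one A).sub (hp.isSelfAdjoint.add hq.isSelfAdjoint)).sq_nonneg
  have hnorm_sq : ‖p - q‖ ^ 2 ≤ 1 := by
    rw [← (by simpa using hpq.norm_pow_two_pow 1 : ‖(p - q) ^ 2‖ = ‖p - q‖ ^ 2)]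
    exact (CStarAlgebra.norm_le_one_iff_of_nonneg _ hpq.sq_nonneg).mpr hsq_le
  exact (sq_le_one_iff₀ (norm_nonneg _)).mp hnorm_sq

namespace ContinuousLinearMap

variable {𝕜 E : Type*} [NontriviallyNormedField 𝕜] [NormedAddCommGroup E] [NormedSpace 𝕜 E]

theorem one_sub_norm_sub_mul_norm_le_of_apply_eq_self {A B : E →L[𝕜] E} {x : E} (hx : B x = x) :
    (1 - ‖A - B‖) * ‖x‖ ≤ ‖A x‖ := by
  have h : ‖x - A x‖ ≤ ‖A - B‖ * ‖x‖ := by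
    simpa [norm_sub_rev, hx] using (A - B).le_opNorm x
  nlinarith [norm_sub_norm_le x (A x)]

theorem isClosed_range_comp_of_norm_sub_lt_one [CompleteSpace E] {A B : E →L[𝕜] E}
    (hB : IsIdempotentElem B) (hAB : ‖A - B‖ < 1) :
    IsClosed (LinearMap.range (A ∘L B : E →ₗ[𝕜] E) : Set E) := by
  have := (IsIdempotentElem.isClosed_range hB).completeSpace_coe
  set f : B.range →L[𝕜] E := A ∘L B.range.subtypeL
  have hfix (x : B.range) : B x = x :=
    (LinearMap.IsIdempotentElem.mem_range_iff (isIdempotentElem_toLinearMap_iff.mpr hB)).mp x.2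
  have hbound (x : B.range) : ‖(x : E)‖ ≤ (1 - ‖A - B‖)⁻¹ * ‖f x‖ := by
    rw [le_inv_mul_iff₀ (sub_pos.mpr hAB)]
    exact one_sub_norm_sub_mul_norm_le_of_apply_eq_self (hfix x)
  have hrange : (LinearMap.range (A ∘L B : E →ₗ[𝕜] E) : Set E) = Set.range f := by
    ext y
    simp [f]
  rw [hrange]
  exact (f.antilipschitz_of_bound (K := ⟨_, (inv_pos.mpr (sub_pos.mpr hAB)).le⟩) hbound
    ).isClosed_range f.uniformContinuous

end ContinuousLinearMap

theorem IsOrthoProj.isStarProjection {P : H →L[ℂ] H} (hP : IsOrthoProj P) : IsStarProjection P :=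
  ⟨hP.1, hP.2⟩

theorem stmt12_general (T : H →L[ℂ] H)
    (hcl : ¬ IsClosed ((LinearMap.range (T : H →ₗ[ℂ] H) : Submodule ℂ H) : Set H)) :
    ∀ P Q : H →L[ℂ] H, IsOrthoProj P → IsOrthoProj Q → T = P ∘L Q →
      ‖P - Q‖ = 1 := by
  rintro P Q hP hQ rfl
  refine (hP.isStarProjection.norm_sub_le_one hQ.isStarProjection).antisymm (not_lt.mp fun h ↦ ?_)
  exact hcl (isClosed_range_comp_of_norm_sub_lt_one hQ.isStarProjection.isIdempotentElem h)

theorem stmt12 (T : H →L[ℂ] H)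
    (hX : ∃ P Q : H →L[ℂ] H, IsOrthoProj P ∧ IsOrthoProj Q ∧ T = P ∘L Q)
    (hcl : ¬ IsClosed ((LinearMap.range (T : H →ₗ[ℂ] H) : Submodule ℂ H) : Set H)) :
    ∀ P Q : H →L[ℂ] H, IsOrthoProj P → IsOrthoProj Q → T = P ∘L Q →
      ‖P - Q‖ = 1 :=
  stmt12_general T hcl
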